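/- arXiv:2407.13171 — 4 statements merged into one kernel-verified Lean document; each statement's English description precedes it below -/
import Mathlib

section
/- If an MMS allocation exists for an instance (N, M, v), then an MMS allocation also exists for the instance (N, M ∪ S, v), where S is a set of items disjoint from M that are valued positively by only a single agent i ∈ N (every other agent values each item of S at zero). -/
open Finset

/-- The bundle of agent `i` under the assignment `π` of goods to agents. -/
def bundleOn {G : Type*} [DecidableEq G] {n : ℕ} (M : Finset G) (π : G → Fin n)
    (i : Fin n) : Finset G :=
  M.filter (fun g => π g = i)

/-- Additive value of a bundle. -/
noncomputable def addVal {G : Type*} (v : G → ℝ) (S : Finset G) : ℝ :=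
  ∑ g ∈ S, v g

/-- Maximin fair share over `n`-partitions of the good set `M`, for an additive
valuation with item values `v`. -/
noncomputable def mmsAdd {G : Type*} [Fintype G] [DecidableEq G] (n : ℕ) (v : G → ℝ)
    (M : Finset G) : ℝ :=
  ⨆ π : G → Fin n, ⨅ j : Fin n, addVal v (bundleOn M π j)

lemma addVal_bundle_union {G : Type*} [DecidableEq G] {n : ℕ} (v : G → ℝ)
    (M S : Finset G) (hMS : Disjoint M S) (π : G → Fin n) (k : Fin n) :
    addVal v (bundleOn (M ∪ S) π k) =
      addVal v (bundleOn M π k) + addVal v (bundleOn S π k) := by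
  unfold addVal bundleOn
  rw [Finset.filter_union, Finset.sum_union
    (hMS.mono (Finset.filter_subset _ _) (Finset.filter_subset _ _))]

lemma mms_union_zero {G : Type*} [Fintype G] [DecidableEq G] {n : ℕ} (v : G → ℝ)
    (M S : Finset G) (hMS : Disjoint M S) (hz : ∀ g ∈ S, v g = 0) :
    mmsAdd n v (M ∪ S) = mmsAdd n v M := by
  unfold mmsAdd
  congr 1
  funext π
  congr 1
  funext k
  rw [addVal_bundle_union v M S hMS π k]
  have : addVal v (bundleOn S π k) = 0 := by
    apply Finset.sum_eq_zero
    intro g hg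
    exact hz g (Finset.mem_of_mem_filter g hg)
  rw [this, add_zero]

lemma mms_union_le {G : Type*} [Fintype G] [DecidableEq G] {n : ℕ} (hn : 0 < n)
    (v : G → ℝ) (hv : ∀ g, 0 ≤ v g) (M S : Finset G) (hMS : Disjoint M S) :
    mmsAdd n v (M ∪ S) ≤ mmsAdd n v M + addVal v S := by
  have : Nonempty (Fin n) := ⟨⟨0, hn⟩⟩
  unfold mmsAdd
  apply ciSup_le
  intro π
  obtain ⟨k₀, hk₀⟩ := Finite.exists_min (fun k => addVal v (bundleOn M π k))
  have h1 : (⨅ k : Fin n, addVal v (bundleOn (M ∪ S) π k)) ≤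
      addVal v (bundleOn (M ∪ S) π k₀) :=
    ciInf_le (Finite.bddBelow_range _) k₀
  have h2 : addVal v (bundleOn S π k₀) ≤ addVal v S :=
    Finset.sum_le_sum_of_subset_of_nonneg (Finset.filter_subset _ _)
      (fun g _ _ => hv g)
  have h3 : addVal v (bundleOn M π k₀) ≤ ⨅ k : Fin n, addVal v (bundleOn M π k) :=
    le_ciInf hk₀
  have h4 : (⨅ k : Fin n, addVal v (bundleOn M π k)) ≤
      ⨆ π' : G → Fin n, ⨅ k : Fin n, addVal v (bundleOn M π' k) :=
    le_ciSup (Finite.bddAbove_range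
      (fun π' : G → Fin n => ⨅ k : Fin n, addVal v (bundleOn M π' k))) π
  have := addVal_bundle_union v M S hMS π k₀
  linarith

/-- If an MMS allocation exists for the instance over good set `M`, then an MMS
allocation also exists for the instance over `M ∪ S`, where `S` is disjoint from `M`
and every item of `S` is valued positively by at most the single agent `i` (every
other agent values each item of `S` at zero). -/
theorem mms_extend_single_agent_items {G : Type*} [Fintype G] [DecidableEq G]
    (n : ℕ) (hn : 0 < n) (v : Fin n → G → ℝ) (hv : ∀ j g, 0 ≤ v j g)
    (M S : Finset G) (hMS : Disjoint M S) (i : Fin n)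
    (hSi : ∀ j : Fin n, j ≠ i → ∀ g ∈ S, v j g = 0)
    (hex : ∃ π : G → Fin n, ∀ j : Fin n,
      mmsAdd n (v j) M ≤ addVal (v j) (bundleOn M π j)) :
    ∃ π : G → Fin n, ∀ j : Fin n,
      mmsAdd n (v j) (M ∪ S) ≤ addVal (v j) (bundleOn (M ∪ S) π j) := by
  obtain ⟨π, hπ⟩ := hex
  refine ⟨fun g => if g ∈ S then i else π g, fun j => ?_⟩
  have hMbundle : ∀ j : Fin n,
      bundleOn M (fun g => if g ∈ S then i else π g) j = bundleOn M π j := by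
    intro j
    unfold bundleOn
    apply Finset.filter_congr
    intro g hg
    have : g ∉ S := fun hS => (hMS.forall_ne_finset hg hS) rfl
    simp [this]
  by_cases hji : j = i
  · subst hji
    have hSbundle : bundleOn S (fun g => if g ∈ S then j else π g) j = S := by
      unfold bundleOn
      apply Finset.filter_true_of_mem
      intro g hg
      simp [hg]
    rw [addVal_bundle_union (v j) M S hMS _ j, hMbundle, hSbundle]
    calc mmsAdd n (v j) (M ∪ S) ≤ mmsAdd n (v j) M + addVal (v j) S :=
          mms_union_le hn (v j) (hv j) M S hMS
      _ ≤ addVal (v j) (bundleOn M π j) + addVal (v j) S := by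
          linarith [hπ j]
  · have hSbundle : bundleOn S (fun g => if g ∈ S then i else π g) j = ∅ := by
      unfold bundleOn
      apply Finset.filter_false_of_mem
      intro g hg
      simp only [hg, if_true]
      exact fun h => hji h.symm
    rw [addVal_bundle_union (v j) M S hMS _ j, hMbundle, hSbundle,
      mms_union_zero (v j) M S hMS (hSi j hji)]
    have : addVal (v j) (∅ : Finset G) = 0 := Finset.sum_empty
    rw [this, add_zero]
    exact hπ j
end

section
/- Let N = {1,2,3} be three agents with cost utilities given by cost function c and approval sets A_1, A_2, A_3, and let S = (S_1, S_2, S_3) be a 3-partition of A_1 such that v_1(S_r) ≥ MMS_1^3(M) for all r ∈ {1,2,3}. Then there exist distinct indices k, ℓ ∈ {1,2,3} such that c(S_k ∩ A_{12}) ≤ μ_{12} and c(S_ℓ ∩ A_{13}) ≤ μ_{13}. -/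
open Finset

/-- Cost-utility value of bundle `S` for an agent with approval set `A`. -/
noncomputable def costVal {G : Type*} [DecidableEq G] (c : G → ℝ) (A S : Finset G) : ℝ :=
  ∑ g ∈ S ∩ A, c g

/-- Maximin fair share over `n`-partitions of the ground set `M`. -/
noncomputable def mmsCost {G : Type*} [Fintype G] [DecidableEq G] (n : ℕ) (c : G → ℝ)
    (A M : Finset G) : ℝ :=
  ⨆ π : G → Fin n, ⨅ j : Fin n, costVal c A (bundleOn M π j)

/-- Any 2-partition of `B` has its min part cost at most the 2-agent MMS of `B`. -/
lemma min_le_mms2 {G : Type*} [Fintype G] [DecidableEq G]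
    (c : G → ℝ) (B T1 T2 : Finset G) (hd : Disjoint T1 T2) (hu : T1 ∪ T2 = B) :
    min (∑ g ∈ T1, c g) (∑ g ∈ T2, c g) ≤ mmsCost 2 c B B := by
  classical
  set π : G → Fin 2 := fun g => if g ∈ T1 then 0 else 1 with hπ
  have hT1B : T1 ⊆ B := hu ▸ Finset.subset_union_left
  have hT2B : T2 ⊆ B := hu ▸ Finset.subset_union_right
  have hb0 : bundleOn B π 0 = T1 := by
    ext g
    by_cases h : g ∈ T1 <;>
      simp [bundleOn, hπ, h, fun hh => hT1B hh]
  have hb1 : bundleOn B π 1 = T2 := by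
    ext g
    by_cases h : g ∈ T1
    · simp [bundleOn, hπ, h, Finset.disjoint_left.mp hd h]
    · have hB : g ∈ B ↔ g ∈ T2 := by
        rw [← hu]; simp [h]
      simp [bundleOn, hπ, h, hB]
  have hv0 : costVal c B T1 = ∑ g ∈ T1, c g := by
    rw [costVal, Finset.inter_eq_left.mpr hT1B]
  have hv1 : costVal c B T2 = ∑ g ∈ T2, c g := by
    rw [costVal, Finset.inter_eq_left.mpr hT2B]
  have hinf : min (∑ g ∈ T1, c g) (∑ g ∈ T2, c g)
      ≤ ⨅ j : Fin 2, costVal c B (bundleOn B π j) := by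
    refine le_ciInf fun j => ?_
    fin_cases j
    · show _ ≤ costVal c B (bundleOn B π 0)
      rw [hb0, hv0]; exact min_le_left _ _
    · show _ ≤ costVal c B (bundleOn B π 1)
      rw [hb1, hv1]; exact min_le_right _ _
  have hsup : (⨅ j : Fin 2, costVal c B (bundleOn B π j))
      ≤ ⨆ π : G → Fin 2, ⨅ j : Fin 2, costVal c B (bundleOn B π j) :=
    le_ciSup (f := fun π : G → Fin 2 => ⨅ j : Fin 2, costVal c B (bundleOn B π j))
      (Set.Finite.bddAbove (Set.finite_range _)) π
  rw [mmsCost]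
  exact hinf.trans hsup

/-- For a 3-partition of `B`, one of the first two parts has cost at most the 2-agent MMS. -/
lemma notboth {G : Type*} [Fintype G] [DecidableEq G]
    (c : G → ℝ) (hc : ∀ g, 0 ≤ c g) (B T0 T1 T2 : Finset G)
    (h01 : Disjoint T0 T1) (h02 : Disjoint T0 T2) (h12 : Disjoint T1 T2)
    (hu : T0 ∪ T1 ∪ T2 = B) :
    (∑ g ∈ T0, c g) ≤ mmsCost 2 c B B ∨ (∑ g ∈ T1, c g) ≤ mmsCost 2 c B B := by
  have hd : Disjoint (T0 ∪ T2) T1 := by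
    rw [Finset.disjoint_union_left]; exact ⟨h01, h12.symm⟩
  have hu' : (T0 ∪ T2) ∪ T1 = B := by
    rw [← hu, Finset.union_right_comm]
  have key := min_le_mms2 c B (T0 ∪ T2) T1 hd hu'
  rw [min_le_iff] at key
  rcases key with h | h
  · left
    rw [Finset.sum_union h02] at h
    have h2 : 0 ≤ ∑ g ∈ T2, c g := Finset.sum_nonneg fun g _ => hc g
    linarith
  · right; exact h

/-- Three agents `0, 1, 2` with cost utilities; `S` is a 3-partition of `A 0`
each of whose bundles agent `1` (index `0`) values at least at her maximin fair
share `MMS₁³(M)`. Then there are distinct indices `k, ℓ` such that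
`c (S k ∩ A₁₂) ≤ μ₁₂` and `c (S ℓ ∩ A₁₃) ≤ μ₁₃`, where `A₁₂ = (A 0 ∩ A 1) \ A 2`
(resp. `A₁₃ = (A 0 ∩ A 2) \ A 1`) are the goods approved exclusively by the two
agents, and `μ₁₂`, `μ₁₃` are the corresponding 2-agent maximin fair shares. -/
theorem exists_distinct_bundles_below_pairwise_mms
    {G : Type*} [Fintype G] [DecidableEq G]
    (c : G → ℝ) (hc : ∀ g, 0 ≤ c g) (A : Fin 3 → Finset G)
    (S : Fin 3 → Finset G)
    (hdisj : ∀ r s : Fin 3, r ≠ s → Disjoint (S r) (S s))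
    (hcover : S 0 ∪ S 1 ∪ S 2 = A 0)
    (hval : ∀ r : Fin 3, mmsCost 3 c (A 0) Finset.univ ≤ costVal c (A 0) (S r)) :
    ∃ k ℓ : Fin 3, k ≠ ℓ ∧
      (∑ g ∈ S k ∩ ((A 0 ∩ A 1) \ A 2), c g) ≤
        mmsCost 2 c ((A 0 ∩ A 1) \ A 2) ((A 0 ∩ A 1) \ A 2) ∧
      (∑ g ∈ S ℓ ∩ ((A 0 ∩ A 2) \ A 1), c g) ≤
        mmsCost 2 c ((A 0 ∩ A 2) \ A 1) ((A 0 ∩ A 2) \ A 1) := by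
  classical
  set B12 := (A 0 ∩ A 1) \ A 2 with hB12
  set B13 := (A 0 ∩ A 2) \ A 1 with hB13
  have hB12A : B12 ⊆ A 0 := (Finset.sdiff_subset).trans Finset.inter_subset_left
  have hB13A : B13 ⊆ A 0 := (Finset.sdiff_subset).trans Finset.inter_subset_left
  -- partition helpers
  have hcov : ∀ (B : Finset G), B ⊆ A 0 →
      (S 0 ∩ B) ∪ (S 1 ∩ B) ∪ (S 2 ∩ B) = B := by
    intro B hB
    rw [← Finset.union_inter_distrib_right, ← Finset.union_inter_distrib_right, hcover,
      Finset.inter_eq_right.mpr hB]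
  have hdisjB : ∀ (B : Finset G) (r s : Fin 3), r ≠ s →
      Disjoint (S r ∩ B) (S s ∩ B) := fun B r s hrs =>
    (hdisj r s hrs).mono Finset.inter_subset_left Finset.inter_subset_left
  -- pairwise disjunctions for B12
  have H12a := notboth c hc B12 (S 0 ∩ B12) (S 1 ∩ B12) (S 2 ∩ B12)
    (hdisjB B12 0 1 (by decide)) (hdisjB B12 0 2 (by decide)) (hdisjB B12 1 2 (by decide))
    (hcov B12 hB12A)
  have H12b := notboth c hc B12 (S 0 ∩ B12) (S 2 ∩ B12) (S 1 ∩ B12)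
    (hdisjB B12 0 2 (by decide)) (hdisjB B12 0 1 (by decide)) (hdisjB B12 2 1 (by decide))
    (by rw [Finset.union_right_comm]; exact hcov B12 hB12A)
  -- pairwise disjunctions for B13
  have H13a := notboth c hc B13 (S 0 ∩ B13) (S 1 ∩ B13) (S 2 ∩ B13)
    (hdisjB B13 0 1 (by decide)) (hdisjB B13 0 2 (by decide)) (hdisjB B13 1 2 (by decide))
    (hcov B13 hB13A)
  have H13b := notboth c hc B13 (S 1 ∩ B13) (S 2 ∩ B13) (S 0 ∩ B13)
    (hdisjB B13 1 2 (by decide)) (hdisjB B13 1 0 (by decide)) (hdisjB B13 2 0 (by decide))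
    (by have h := hcov B13 hB13A
        conv_rhs => rw [← h]
        rw [Finset.union_comm _ (S 0 ∩ B13), ← Finset.union_assoc])
  -- case analysis
  by_cases h0 : (∑ g ∈ S 0 ∩ B12, c g) ≤ mmsCost 2 c B12 B12
  · rcases H13b with h | h
    · exact ⟨0, 1, by decide, h0, h⟩
    · exact ⟨0, 2, by decide, h0, h⟩
  · have h1 : (∑ g ∈ S 1 ∩ B12, c g) ≤ mmsCost 2 c B12 B12 := H12a.resolve_left h0
    have h2 : (∑ g ∈ S 2 ∩ B12, c g) ≤ mmsCost 2 c B12 B12 := H12b.resolve_left h0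
    by_cases hy0 : (∑ g ∈ S 0 ∩ B13, c g) ≤ mmsCost 2 c B13 B13
    · exact ⟨1, 0, by decide, h1, hy0⟩
    · have hy1 : (∑ g ∈ S 1 ∩ B13, c g) ≤ mmsCost 2 c B13 B13 := H13a.resolve_left hy0
      exact ⟨2, 1, by decide, h2, hy1⟩
end

section
/- For two agents with cost utilities over five goods g_2, g_3, g_4, g_5, g_6 with costs c(g_i) = i for i ∈ {2,3,4,5,6}, there is no allocation mechanism f mapping profiles of reported approval sets to allocations that is strategyproof and, for every profile, outputs a Pareto efficient MMS allocation. -/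
open Finset

/-- A mechanism `f` is strategyproof: no agent can obtain a bundle of strictly
higher true value by misreporting their approval set. -/
def Strategyproof {G : Type*} [Fintype G] [DecidableEq G] {n : ℕ} (c : G → ℝ)
    (f : (Fin n → Finset G) → (G → Fin n)) : Prop :=
  ∀ (A : Fin n → Finset G) (i : Fin n) (A' : Finset G),
    costVal c (A i) (bundleOn Finset.univ (f (Function.update A i A')) i) ≤
      costVal c (A i) (bundleOn Finset.univ (f A) i)

/-- The allocation `π` is Pareto efficient for the profile `A` of approval sets. -/
def ParetoEffFor {G : Type*} [Fintype G] [DecidableEq G] {n : ℕ} (c : G → ℝ)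
    (A : Fin n → Finset G) (π : G → Fin n) : Prop :=
  ¬ ∃ π' : G → Fin n,
      (∀ i : Fin n,
        costVal c (A i) (bundleOn Finset.univ π i) ≤
          costVal c (A i) (bundleOn Finset.univ π' i)) ∧
      (∃ i : Fin n,
        costVal c (A i) (bundleOn Finset.univ π i) <
          costVal c (A i) (bundleOn Finset.univ π' i))

lemma fin2 : ∀ x : Fin 2, x = 0 ∨ x = 1 := by decide

lemma evalV (A : Finset (Fin 5)) (π : Fin 5 → Fin 2) (i : Fin 2) :
    costVal (fun g : Fin 5 => (g : ℝ) + 2) A (bundleOn Finset.univ π i) =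
      (if 0 ∈ A ∧ π 0 = i then (2:ℝ) else 0) + (if 1 ∈ A ∧ π 1 = i then 3 else 0) +
      (if 2 ∈ A ∧ π 2 = i then 4 else 0) + (if 3 ∈ A ∧ π 3 = i then 5 else 0) +
      (if 4 ∈ A ∧ π 4 = i then 6 else 0) := by
  have h : (bundleOn (Finset.univ : Finset (Fin 5)) π i) ∩ A
      = Finset.univ.filter (fun g => g ∈ A ∧ π g = i) := by
    ext g; simp [bundleOn, and_comm]
  rw [costVal, h, Finset.sum_filter, Fin.sum_univ_five]
  norm_num [show ((3:Fin 5):ℕ) = 3 from rfl, show ((4:Fin 5):ℕ) = 4 from rfl]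

lemma mms_ge (A : Finset (Fin 5)) (π0 : Fin 5 → Fin 2) (m : ℝ)
    (h : ∀ j, m ≤ costVal (fun g : Fin 5 => (g : ℝ) + 2) A (bundleOn Finset.univ π0 j)) :
    m ≤ mmsCost 2 (fun g : Fin 5 => (g : ℝ) + 2) A Finset.univ :=
  le_ciSup_of_le (Set.Finite.bddAbove (Set.finite_range _)) π0 (le_ciInf h)

notation "cω" => (fun g : Fin 5 => (g : ℝ) + 2)

lemma evalU (π : Fin 5 → Fin 2) (i : Fin 2) :
    costVal cω Finset.univ (bundleOn Finset.univ π i) =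
      (if π 0 = i then (2:ℝ) else 0) + (if π 1 = i then 3 else 0) +
      (if π 2 = i then 4 else 0) + (if π 3 = i then 5 else 0) +
      (if π 4 = i then 6 else 0) := by
  rw [evalV]; simp

lemma eval24 (π : Fin 5 → Fin 2) (i : Fin 2) :
    costVal cω {2, 4} (bundleOn Finset.univ π i) =
      (if π 2 = i then (4:ℝ) else 0) + (if π 4 = i then 6 else 0) := by
  rw [evalV]
  simp [show ((0:Fin 5) ∈ ({2,4}:Finset (Fin 5))) = False from by decide,
    show ((1:Fin 5) ∈ ({2,4}:Finset (Fin 5))) = False from by decide,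
    show ((2:Fin 5) ∈ ({2,4}:Finset (Fin 5))) = True from by decide,
    show ((3:Fin 5) ∈ ({2,4}:Finset (Fin 5))) = False from by decide,
    show ((4:Fin 5) ∈ ({2,4}:Finset (Fin 5))) = True from by decide]

lemma eval0234 (π : Fin 5 → Fin 2) (i : Fin 2) :
    costVal cω {0, 2, 3, 4} (bundleOn Finset.univ π i) =
      (if π 0 = i then (2:ℝ) else 0) + (if π 2 = i then 4 else 0) +
      (if π 3 = i then 5 else 0) + (if π 4 = i then 6 else 0) := by
  rw [evalV]
  simp [show ((0:Fin 5) ∈ ({0,2,3,4}:Finset (Fin 5))) = True from by decide,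
    show ((1:Fin 5) ∈ ({0,2,3,4}:Finset (Fin 5))) = False from by decide,
    show ((2:Fin 5) ∈ ({0,2,3,4}:Finset (Fin 5))) = True from by decide,
    show ((3:Fin 5) ∈ ({0,2,3,4}:Finset (Fin 5))) = True from by decide,
    show ((4:Fin 5) ∈ ({0,2,3,4}:Finset (Fin 5))) = True from by decide,
    add_assoc]

lemma stepP (π : Fin 5 → Fin 2)
    (hA : 10 ≤ costVal cω Finset.univ (bundleOn Finset.univ π 0))
    (hB : 10 ≤ costVal cω Finset.univ (bundleOn Finset.univ π 1)) :
    (π 0 = 0 ∧ π 1 = 0 ∧ π 2 = 1 ∧ π 3 = 0 ∧ π 4 = 1) ∨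
    (π 0 = 1 ∧ π 1 = 1 ∧ π 2 = 0 ∧ π 3 = 1 ∧ π 4 = 0) := by
  rw [evalU] at hA hB
  rcases fin2 (π 0) with h0|h0 <;> rcases fin2 (π 1) with h1|h1 <;>
    rcases fin2 (π 2) with h2|h2 <;> rcases fin2 (π 3) with h3|h3 <;>
    rcases fin2 (π 4) with h4|h4 <;>
    (revert hA hB; norm_num [h0, h1, h2, h3, h4])

lemma stepQ1 (π : Fin 5 → Fin 2)
    (hA : 10 ≤ costVal cω Finset.univ (bundleOn Finset.univ π 0))
    (hB : 10 ≤ costVal cω {2, 4} (bundleOn Finset.univ π 1)) :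
    π 0 = 0 ∧ π 1 = 0 ∧ π 2 = 1 ∧ π 3 = 0 ∧ π 4 = 1 := by
  rw [evalU] at hA; rw [eval24] at hB
  rcases fin2 (π 0) with h0|h0 <;> rcases fin2 (π 1) with h1|h1 <;>
    rcases fin2 (π 2) with h2|h2 <;> rcases fin2 (π 3) with h3|h3 <;>
    rcases fin2 (π 4) with h4|h4 <;>
    (revert hA hB; norm_num [h0, h1, h2, h3, h4])

lemma stepQ2 (π : Fin 5 → Fin 2)
    (hA : 10 ≤ costVal cω Finset.univ (bundleOn Finset.univ π 1))
    (hB : 10 ≤ costVal cω {2, 4} (bundleOn Finset.univ π 0)) :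
    π 0 = 1 ∧ π 1 = 1 ∧ π 2 = 0 ∧ π 3 = 1 ∧ π 4 = 0 := by
  rw [evalU] at hA; rw [eval24] at hB
  rcases fin2 (π 0) with h0|h0 <;> rcases fin2 (π 1) with h1|h1 <;>
    rcases fin2 (π 2) with h2|h2 <;> rcases fin2 (π 3) with h3|h3 <;>
    rcases fin2 (π 4) with h4|h4 <;>
    (revert hA hB; norm_num [h0, h1, h2, h3, h4])

lemma stepR1 (π : Fin 5 → Fin 2)
    (h1 : 8 ≤ costVal cω {0, 2, 3, 4} (bundleOn Finset.univ π 0))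
    (h2 : 4 ≤ costVal cω {2, 4} (bundleOn Finset.univ π 1))
    (h3 : costVal cω Finset.univ (bundleOn Finset.univ π 0) ≤ 10) :
    (π 0 = 1 ∧ π 1 = 1 ∧ π 2 = 0 ∧ π 3 = 0 ∧ π 4 = 1) ∨
    (π 0 = 0 ∧ π 1 = 1 ∧ π 2 = 1 ∧ π 3 = 1 ∧ π 4 = 0) := by
  rw [eval0234] at h1; rw [eval24] at h2; rw [evalU] at h3
  rcases fin2 (π 0) with h0|h0 <;> rcases fin2 (π 1) with hb|hb <;>
    rcases fin2 (π 2) with hc|hc <;> rcases fin2 (π 3) with hd|hd <;>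
    rcases fin2 (π 4) with he|he <;>
    (revert h1 h2 h3; norm_num [h0, hb, hc, hd, he])

lemma stepR2 (π : Fin 5 → Fin 2)
    (h1 : 8 ≤ costVal cω {0, 2, 3, 4} (bundleOn Finset.univ π 1))
    (h2 : 4 ≤ costVal cω {2, 4} (bundleOn Finset.univ π 0))
    (h3 : costVal cω Finset.univ (bundleOn Finset.univ π 1) ≤ 10) :
    (π 0 = 1 ∧ π 1 = 0 ∧ π 2 = 0 ∧ π 3 = 0 ∧ π 4 = 1) ∨
    (π 0 = 0 ∧ π 1 = 0 ∧ π 2 = 1 ∧ π 3 = 1 ∧ π 4 = 0) := by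
  rw [eval0234] at h1; rw [eval24] at h2; rw [evalU] at h3
  rcases fin2 (π 0) with h0|h0 <;> rcases fin2 (π 1) with hb|hb <;>
    rcases fin2 (π 2) with hc|hc <;> rcases fin2 (π 3) with hd|hd <;>
    rcases fin2 (π 4) with he|he <;>
    (revert h1 h2 h3; norm_num [h0, hb, hc, hd, he])


/-- For two agents and five goods `g₂, …, g₆` of costs `2, …, 6` (modelled as
`Fin 5` with good `g` having cost `g + 2`), no strategyproof mechanism always
outputs a Pareto efficient MMS allocation. -/
theorem no_strategyproof_pareto_mms_two_agents_five_goods :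
    ¬ ∃ f : (Fin 2 → Finset (Fin 5)) → (Fin 5 → Fin 2),
        Strategyproof (fun g : Fin 5 => (g : ℝ) + 2) f ∧
        ∀ A : Fin 2 → Finset (Fin 5),
          ParetoEffFor (fun g : Fin 5 => (g : ℝ) + 2) A (f A) ∧
          ∀ i : Fin 2,
            mmsCost 2 (fun g : Fin 5 => (g : ℝ) + 2) (A i) Finset.univ ≤
              costVal (fun g : Fin 5 => (g : ℝ) + 2) (A i)
                (bundleOn Finset.univ (f A) i) := by
  rintro ⟨f, hSP, hALL⟩
  -- profiles
  set P : Fin 2 → Finset (Fin 5) := ![Finset.univ, Finset.univ] with hPdef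
  set Q1 : Fin 2 → Finset (Fin 5) := ![Finset.univ, {2,4}] with hQ1def
  set R1 : Fin 2 → Finset (Fin 5) := ![{0,2,3,4}, {2,4}] with hR1def
  set Q2 : Fin 2 → Finset (Fin 5) := ![{2,4}, Finset.univ] with hQ2def
  set R2 : Fin 2 → Finset (Fin 5) := ![{2,4}, {0,2,3,4}] with hR2def
  -- mms witnesses
  have wU : (10:ℝ) ≤ mmsCost 2 cω Finset.univ Finset.univ := by
    refine mms_ge _ ![0,0,1,0,1] 10 ?_
    intro j; rcases fin2 j with h|h <;> subst h <;> rw [evalU] <;>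
      norm_num [show (![(0:Fin 2),0,1,0,1]) 0 = 0 from rfl, show (![(0:Fin 2),0,1,0,1]) 1 = 0 from rfl,
        show (![(0:Fin 2),0,1,0,1]) 2 = 1 from rfl, show (![(0:Fin 2),0,1,0,1]) 3 = 0 from rfl,
        show (![(0:Fin 2),0,1,0,1]) 4 = 1 from rfl]
  have w24 : (4:ℝ) ≤ mmsCost 2 cω {2,4} Finset.univ := by
    refine mms_ge _ ![0,0,0,0,1] 4 ?_
    intro j; rcases fin2 j with h|h <;> subst h <;> rw [eval24] <;>
      norm_num [show (![(0:Fin 2),0,0,0,1]) 2 = 0 from rfl, show (![(0:Fin 2),0,0,0,1]) 4 = 1 from rfl]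
  have w0234 : (8:ℝ) ≤ mmsCost 2 cω {0,2,3,4} Finset.univ := by
    refine mms_ge _ ![1,1,0,0,1] 8 ?_
    intro j; rcases fin2 j with h|h <;> subst h <;> rw [eval0234] <;>
      norm_num [show (![(1:Fin 2),1,0,0,1]) 0 = 1 from rfl, show (![(1:Fin 2),1,0,0,1]) 2 = 0 from rfl,
        show (![(1:Fin 2),1,0,0,1]) 3 = 0 from rfl, show (![(1:Fin 2),1,0,0,1]) 4 = 1 from rfl]
  -- step at P
  have hP := stepP (f P) (le_trans wU ((hALL P).2 0)) (le_trans wU ((hALL P).2 1))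
  rcases hP with ⟨p0, p1, p2, p3, p4⟩ | ⟨p0, p1, p2, p3, p4⟩
  · -- Case 1 : f P gives agent 0 the goods {0,1,3}
    have hS1 := hSP Q1 1 Finset.univ
    rw [show Function.update Q1 1 Finset.univ = P from by rw [hQ1def, hPdef]; decide] at hS1
    have hv : costVal cω ((Q1 : Fin 2 → Finset (Fin 5)) 1) (bundleOn Finset.univ (f P) 1) = 10 := by
      show costVal cω {2,4} _ = 10
      rw [eval24]; norm_num [p2, p4]
    rw [hv] at hS1
    have hQ1B : (10:ℝ) ≤ costVal cω {2,4} (bundleOn Finset.univ (f Q1) 1) := hS1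
    have hQ1A : (10:ℝ) ≤ costVal cω Finset.univ (bundleOn Finset.univ (f Q1) 0) :=
      le_trans wU ((hALL Q1).2 0)
    obtain ⟨q0, q1, q2, q3, q4⟩ := stepQ1 (f Q1) hQ1A hQ1B
    -- SP from Q1 to R1 (agent 0 misreports {0,2,3,4})
    have hS2 := hSP Q1 0 {0,2,3,4}
    rw [show Function.update Q1 0 {0,2,3,4} = R1 from by rw [hQ1def, hR1def]; decide] at hS2
    have hv2 : costVal cω ((Q1 : Fin 2 → Finset (Fin 5)) 0) (bundleOn Finset.univ (f Q1) 0) = 10 := by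
      show costVal cω Finset.univ _ = 10
      rw [evalU]; norm_num [q0, q1, q2, q3, q4]
    rw [hv2] at hS2
    have hR1a : (8:ℝ) ≤ costVal cω {0,2,3,4} (bundleOn Finset.univ (f R1) 0) :=
      le_trans w0234 ((hALL R1).2 0)
    have hR1b : (4:ℝ) ≤ costVal cω {2,4} (bundleOn Finset.univ (f R1) 1) :=
      le_trans w24 ((hALL R1).2 1)
    have hPO := (hALL R1).1
    rcases stepR1 (f R1) hR1a hR1b hS2 with ⟨r0, r1, r2, r3, r4⟩ | ⟨r0, r1, r2, r3, r4⟩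
    · -- bundle0 = {2,3}, dominated by π' = ![0,1,0,0,1] (bundle0 = {0,2,3})
      refine hPO ⟨![0,1,0,0,1], fun i => ?_, ⟨0, ?_⟩⟩
      · rcases fin2 i with h|h <;> subst h
        · show costVal cω {0,2,3,4} _ ≤ costVal cω {0,2,3,4} _
          rw [eval0234, eval0234]
          norm_num [r0, r1, r2, r3, r4, show (![(0:Fin 2),1,0,0,1]) 0 = 0 from rfl,
            show (![(0:Fin 2),1,0,0,1]) 2 = 0 from rfl, show (![(0:Fin 2),1,0,0,1]) 3 = 0 from rfl,
            show (![(0:Fin 2),1,0,0,1]) 4 = 1 from rfl]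
        · show costVal cω {2,4} _ ≤ costVal cω {2,4} _
          rw [eval24, eval24]
          norm_num [r2, r4, show (![(0:Fin 2),1,0,0,1]) 2 = 0 from rfl,
            show (![(0:Fin 2),1,0,0,1]) 4 = 1 from rfl]
      · show costVal cω {0,2,3,4} _ < costVal cω {0,2,3,4} _
        rw [eval0234, eval0234]
        norm_num [r0, r1, r2, r3, r4, show (![(0:Fin 2),1,0,0,1]) 0 = 0 from rfl,
          show (![(0:Fin 2),1,0,0,1]) 2 = 0 from rfl, show (![(0:Fin 2),1,0,0,1]) 3 = 0 from rfl,
          show (![(0:Fin 2),1,0,0,1]) 4 = 1 from rfl]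
    · -- bundle0 = {0,4}, dominated by π' = ![1,1,0,0,1] (bundle0 = {2,3})
      refine hPO ⟨![1,1,0,0,1], fun i => ?_, ⟨0, ?_⟩⟩
      · rcases fin2 i with h|h <;> subst h
        · show costVal cω {0,2,3,4} _ ≤ costVal cω {0,2,3,4} _
          rw [eval0234, eval0234]
          norm_num [r0, r1, r2, r3, r4, show (![(1:Fin 2),1,0,0,1]) 0 = 1 from rfl,
            show (![(1:Fin 2),1,0,0,1]) 2 = 0 from rfl, show (![(1:Fin 2),1,0,0,1]) 3 = 0 from rfl,
            show (![(1:Fin 2),1,0,0,1]) 4 = 1 from rfl]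
        · show costVal cω {2,4} _ ≤ costVal cω {2,4} _
          rw [eval24, eval24]
          norm_num [r2, r4, show (![(1:Fin 2),1,0,0,1]) 2 = 0 from rfl,
            show (![(1:Fin 2),1,0,0,1]) 4 = 1 from rfl]
      · show costVal cω {0,2,3,4} _ < costVal cω {0,2,3,4} _
        rw [eval0234, eval0234]
        norm_num [r0, r1, r2, r3, r4, show (![(1:Fin 2),1,0,0,1]) 0 = 1 from rfl,
          show (![(1:Fin 2),1,0,0,1]) 2 = 0 from rfl, show (![(1:Fin 2),1,0,0,1]) 3 = 0 from rfl,
          show (![(1:Fin 2),1,0,0,1]) 4 = 1 from rfl]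
  · -- Case 2 : f P gives agent 0 the goods {2,4}
    have hS1 := hSP Q2 0 Finset.univ
    rw [show Function.update Q2 0 Finset.univ = P from by rw [hQ2def, hPdef]; decide] at hS1
    have hv : costVal cω ((Q2 : Fin 2 → Finset (Fin 5)) 0) (bundleOn Finset.univ (f P) 0) = 10 := by
      show costVal cω {2,4} _ = 10
      rw [eval24]; norm_num [p2, p4]
    rw [hv] at hS1
    have hQ2B : (10:ℝ) ≤ costVal cω {2,4} (bundleOn Finset.univ (f Q2) 0) := hS1
    have hQ2A : (10:ℝ) ≤ costVal cω Finset.univ (bundleOn Finset.univ (f Q2) 1) :=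
      le_trans wU ((hALL Q2).2 1)
    obtain ⟨q0, q1, q2, q3, q4⟩ := stepQ2 (f Q2) hQ2A hQ2B
    have hS2 := hSP Q2 1 {0,2,3,4}
    rw [show Function.update Q2 1 {0,2,3,4} = R2 from by rw [hQ2def, hR2def]; decide] at hS2
    have hv2 : costVal cω ((Q2 : Fin 2 → Finset (Fin 5)) 1) (bundleOn Finset.univ (f Q2) 1) = 10 := by
      show costVal cω Finset.univ _ = 10
      rw [evalU]; norm_num [q0, q1, q2, q3, q4]
    rw [hv2] at hS2
    have hR2a : (8:ℝ) ≤ costVal cω {0,2,3,4} (bundleOn Finset.univ (f R2) 1) :=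
      le_trans w0234 ((hALL R2).2 1)
    have hR2b : (4:ℝ) ≤ costVal cω {2,4} (bundleOn Finset.univ (f R2) 0) :=
      le_trans w24 ((hALL R2).2 0)
    have hPO := (hALL R2).1
    rcases stepR2 (f R2) hR2a hR2b hS2 with ⟨r0, r1, r2, r3, r4⟩ | ⟨r0, r1, r2, r3, r4⟩
    · -- bundle0 = {1,2,3}, dominated by π' = ![1,1,0,1,1] (bundle0 = {2})
      refine hPO ⟨![1,1,0,1,1], fun i => ?_, ⟨1, ?_⟩⟩
      · rcases fin2 i with h|h <;> subst h
        · show costVal cω {2,4} _ ≤ costVal cω {2,4} _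
          rw [eval24, eval24]
          norm_num [r2, r4, show (![(1:Fin 2),1,0,1,1]) 2 = 0 from rfl,
            show (![(1:Fin 2),1,0,1,1]) 4 = 1 from rfl]
        · show costVal cω {0,2,3,4} _ ≤ costVal cω {0,2,3,4} _
          rw [eval0234, eval0234]
          norm_num [r0, r1, r2, r3, r4, show (![(1:Fin 2),1,0,1,1]) 0 = 1 from rfl,
            show (![(1:Fin 2),1,0,1,1]) 2 = 0 from rfl, show (![(1:Fin 2),1,0,1,1]) 3 = 1 from rfl,
            show (![(1:Fin 2),1,0,1,1]) 4 = 1 from rfl]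
      · show costVal cω {0,2,3,4} _ < costVal cω {0,2,3,4} _
        rw [eval0234, eval0234]
        norm_num [r0, r1, r2, r3, r4, show (![(1:Fin 2),1,0,1,1]) 0 = 1 from rfl,
          show (![(1:Fin 2),1,0,1,1]) 2 = 0 from rfl, show (![(1:Fin 2),1,0,1,1]) 3 = 1 from rfl,
          show (![(1:Fin 2),1,0,1,1]) 4 = 1 from rfl]
    · -- bundle0 = {0,1,4}, dominated by π' = ![1,1,1,1,0] (bundle0 = {4})
      refine hPO ⟨![1,1,1,1,0], fun i => ?_, ⟨1, ?_⟩⟩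
      · rcases fin2 i with h|h <;> subst h
        · show costVal cω {2,4} _ ≤ costVal cω {2,4} _
          rw [eval24, eval24]
          norm_num [r2, r4, show (![(1:Fin 2),1,1,1,0]) 2 = 1 from rfl,
            show (![(1:Fin 2),1,1,1,0]) 4 = 0 from rfl]
        · show costVal cω {0,2,3,4} _ ≤ costVal cω {0,2,3,4} _
          rw [eval0234, eval0234]
          norm_num [r0, r1, r2, r3, r4, show (![(1:Fin 2),1,1,1,0]) 0 = 1 from rfl,
            show (![(1:Fin 2),1,1,1,0]) 2 = 1 from rfl, show (![(1:Fin 2),1,1,1,0]) 3 = 1 from rfl,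
            show (![(1:Fin 2),1,1,1,0]) 4 = 0 from rfl]
      · show costVal cω {0,2,3,4} _ < costVal cω {0,2,3,4} _
        rw [eval0234, eval0234]
        norm_num [r0, r1, r2, r3, r4, show (![(1:Fin 2),1,1,1,0]) 0 = 1 from rfl,
          show (![(1:Fin 2),1,1,1,0]) 2 = 1 from rfl, show (![(1:Fin 2),1,1,1,0]) 3 = 1 from rfl,
          show (![(1:Fin 2),1,1,1,0]) 4 = 0 from rfl]
end

section
/- Let there be n agents and n+2 goods g_1, ..., g_{n+2} ordered so that c(g_k) ≤ c(g_ℓ) for all k < ℓ, and suppose c(g_4) > c(g_2) + c(g_3). Then for an agent whose approval set is all of M (so whose valuation equals c), the maximin fair share is MMS^n(M) = min( c(g_1) + c(g_2) + c(g_3), c(g_4) ). -/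
open Finset

/-- The bundle of agent `i` under the assignment `π` of the `n + 2` goods to agents. -/
def bundleOf {n : ℕ} (π : Fin (n + 2) → Fin n) (i : Fin n) : Finset (Fin (n + 2)) :=
  Finset.univ.filter (fun g => π g = i)

/-- Maximin fair share of an agent who values every good at its cost, with `n`
agents and goods `Fin (n + 2)`: max over `n`-partitions of the minimum bundle cost. -/
noncomputable def mmsAll (n : ℕ) (c : Fin (n + 2) → ℝ) : ℝ :=
  ⨆ π : Fin (n + 2) → Fin n, ⨅ j : Fin n, ∑ g ∈ bundleOf π j, c g

lemma mem_bundleOf {n : ℕ} (π : Fin (n + 2) → Fin n) (i : Fin n) (g : Fin (n + 2)) :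
    g ∈ bundleOf π i ↔ π g = i := by
  simp [bundleOf]

lemma sum_three {n : ℕ} (hn : 2 ≤ n) (c : Fin (n + 2) → ℝ) :
    ∑ g ∈ ({⟨0, by linarith⟩, ⟨1, by linarith⟩, ⟨2, by linarith⟩} : Finset (Fin (n + 2))), c g =
      c ⟨0, by linarith⟩ + c ⟨1, by linarith⟩ + c ⟨2, by linarith⟩ := by
  rw [Finset.sum_insert (by simp [Fin.ext_iff]), Finset.sum_insert (by simp [Fin.ext_iff]),
    Finset.sum_singleton]
  ring

/-- Upper bound: every partition has a bundle of cost at most the claimed value. -/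
lemma inf_le_bound (n : ℕ) (hn : 2 ≤ n) (c : Fin (n + 2) → ℝ) (hc : ∀ g, 0 ≤ c g)
    (hmono : Monotone c)
    (h4 : c (⟨1, by linarith⟩ : Fin (n + 2)) + c (⟨2, by linarith⟩ : Fin (n + 2)) <
      c (⟨3, by linarith⟩ : Fin (n + 2)))
    (π : Fin (n + 2) → Fin n) :
    (⨅ j : Fin n, ∑ g ∈ bundleOf π j, c g) ≤
      min (c (⟨0, by linarith⟩ : Fin (n + 2)) + c (⟨1, by linarith⟩ : Fin (n + 2)) +
            c (⟨2, by linarith⟩ : Fin (n + 2)))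
        (c (⟨3, by linarith⟩ : Fin (n + 2))) := by
  haveI : Nonempty (Fin n) := ⟨⟨0, by linarith⟩⟩
  set F : Fin n → ℝ := fun j => ∑ g ∈ bundleOf π j, c g with hF
  have hIle : ∀ j, (⨅ j, F j) ≤ F j := fun j =>
    ciInf_le (Set.Finite.bddBelow (Set.finite_range F)) j
  set S : Finset (Fin (n + 2)) := Finset.univ.filter (fun g => 3 ≤ g.val) with hS
  have hmemS : ∀ g : Fin (n + 2), g ∈ S ↔ 3 ≤ g.val := by
    intro g; simp [hS]
  set T : Finset (Fin (n + 2)) := {⟨0, by linarith⟩, ⟨1, by linarith⟩, ⟨2, by linarith⟩} with hT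
  have hmemT : ∀ g : Fin (n + 2), g ∈ T ↔ g.val < 3 := by
    intro g; simp only [hT, Finset.mem_insert, Finset.mem_singleton, Fin.ext_iff, Fin.val_mk]; omega
  have cardS : S.card = n - 1 := by
    have h1 := Finset.card_filter_add_card_filter_not
      (s := (Finset.univ : Finset (Fin (n + 2)))) (p := fun g => 3 ≤ g.val)
    have h2 : (Finset.univ.filter (fun g : Fin (n + 2) => ¬ 3 ≤ g.val)) = T := by
      ext g; simp [hmemT g]
    rw [h2] at h1
    have h3 : T.card = 3 := by
      rw [hT]
      rw [Finset.card_insert_of_notMem (by simp [Fin.ext_iff]),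
        Finset.card_insert_of_notMem (by simp [Fin.ext_iff]), Finset.card_singleton]
    rw [h3, Finset.card_univ, Fintype.card_fin] at h1
    have hSfilter : (Finset.univ.filter (fun g : Fin (n + 2) => 3 ≤ g.val)).card = S.card := by
      rw [hS]
    rw [hSfilter] at h1
    omega
  -- pigeonhole: some agent receives no good of index ≥ 3
  have hpig : ∃ j : Fin n, ∀ g ∈ S, π g ≠ j := by
    by_contra h
    push_neg at h
    have hsub : (Finset.univ : Finset (Fin n)) ⊆ S.image π := by
      intro j _
      obtain ⟨g, hg, hgj⟩ := h j
      exact Finset.mem_image.mpr ⟨g, hg, hgj⟩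
    have h1 := Finset.card_le_card hsub
    have h2 := Finset.card_image_le (f := π) (s := S)
    rw [Finset.card_univ, Fintype.card_fin] at h1
    omega
  obtain ⟨j, hj⟩ := hpig
  have hBsub : bundleOf π j ⊆ T := by
    intro g hg
    rw [mem_bundleOf] at hg
    rw [hmemT]
    by_contra hlt
    exact hj g ((hmemS g).mpr (by omega)) hg
  by_cases hBT : bundleOf π j = T
  · -- bundle j is exactly {0,1,2}
    have hle1 : (⨅ j, F j) ≤ c ⟨0, by linarith⟩ + c ⟨1, by linarith⟩ + c ⟨2, by linarith⟩ := by
      have := hIle j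
      rw [hF] at this
      simp only [hBT] at this; rw [hT, sum_three hn c] at this; exact this
    have hle2 : (⨅ j, F j) ≤ c ⟨3, by linarith⟩ := by
      by_cases hinj : Set.InjOn π ↑S
      · -- good 3 is alone in its bundle
        have h3S : (⟨3, by linarith⟩ : Fin (n + 2)) ∈ S := (hmemS _).mpr (by simp)
        have hb3 : bundleOf π (π ⟨3, by linarith⟩) = {⟨3, by linarith⟩} := by
          ext g
          rw [mem_bundleOf, Finset.mem_singleton]
          constructor
          · intro hg
            by_cases hgS : g ∈ S
            · exact hinj hgS h3S hg
            · exfalso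
              have hgT : g ∈ T := (hmemT g).mpr (by
                have := (hmemS g).not.mp hgS; omega)
              rw [← hBT, mem_bundleOf] at hgT
              exact hj _ h3S (hg ▸ hgT)
          · intro hg; rw [hg]
        have := hIle (π ⟨3, by linarith⟩)
        rw [hF] at this
        simpa [hb3] using this
      · -- two large goods share a bundle, so some bundle is empty
        have hcardim : (S.image π).card < S.card := by
          rcases lt_or_eq_of_le (Finset.card_image_le (f := π) (s := S)) with h | h
          · exact h
          · exact absurd (Finset.injOn_of_card_image_eq h) hinj
        have htot : (Finset.univ.image π : Finset (Fin n)) ⊆ insert j (S.image π) := by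
          intro k hk
          obtain ⟨g, _, hg⟩ := Finset.mem_image.mp hk
          by_cases hgS : g ∈ S
          · exact Finset.mem_insert_of_mem (Finset.mem_image.mpr ⟨g, hgS, hg⟩)
          · have hgT : g ∈ T := (hmemT g).mpr (by
              have := (hmemS g).not.mp hgS; omega)
            rw [← hBT, mem_bundleOf] at hgT
            rw [← hg, hgT]
            exact Finset.mem_insert_self _ _
        have hex : ∃ k : Fin n, k ∉ Finset.univ.image π := by
          by_contra h
          push_neg at h
          have h1 := Finset.card_le_card (fun k (_ : k ∈ (Finset.univ : Finset (Fin n))) => h k)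
          have h2 := Finset.card_le_card htot
          have h3 := Finset.card_insert_le j (S.image π)
          rw [Finset.card_univ, Fintype.card_fin] at h1
          omega
        obtain ⟨k, hk⟩ := hex
        have hbk : bundleOf π k = ∅ := by
          ext g
          rw [mem_bundleOf]
          simp only [Finset.notMem_empty, iff_false]
          intro hg
          exact hk (Finset.mem_image.mpr ⟨g, Finset.mem_univ g, hg⟩)
        have h0 : F k = 0 := by rw [hF]; simp [hbk]
        have := hIle k
        rw [h0] at this
        exact this.trans (hc _)
    exact le_min hle1 hle2
  · -- bundle j is a proper subset of {0,1,2}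
    obtain ⟨t, htT, htB⟩ := Finset.exists_of_ssubset (ssubset_of_subset_of_ne hBsub hBT)
    have hsub' : bundleOf π j ⊆ T.erase t := Finset.subset_erase.mpr ⟨hBsub, htB⟩
    have hsum1 : F j ≤ ∑ g ∈ T.erase t, c g :=
      Finset.sum_le_sum_of_subset_of_nonneg hsub' (fun g _ _ => hc g)
    have hsum2 : ∑ g ∈ T.erase t, c g + c t = ∑ g ∈ T, c g :=
      Finset.sum_erase_add T c htT
    have hct : c ⟨0, by linarith⟩ ≤ c t := hmono (by simp [Fin.le_def])
    have hTsum : ∑ g ∈ T, c g = c ⟨0, by linarith⟩ + c ⟨1, by linarith⟩ + c ⟨2, by linarith⟩ :=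
      sum_three hn c
    have hle : F j ≤ c ⟨1, by linarith⟩ + c ⟨2, by linarith⟩ := by linarith
    have h12 : c ⟨1, by linarith⟩ + c ⟨2, by linarith⟩ ≤
        min (c ⟨0, by linarith⟩ + c ⟨1, by linarith⟩ + c ⟨2, by linarith⟩) (c ⟨3, by linarith⟩) :=
      le_min (by linarith [hc (⟨0, by linarith⟩ : Fin (n + 2))]) (le_of_lt h4)
    exact (hIle j).trans (hle.trans h12)

/-- With `n ≥ 2` agents and `n + 2` goods `g_1, …, g_{n+2}` (indexed `0, …, n+1`)
ordered by nondecreasing cost, if `c g₄ > c g₂ + c g₃` then the maximin fair share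
of an agent approving all goods is `min (c g₁ + c g₂ + c g₃) (c g₄)`. -/
theorem mms_value_large_fourth_good (n : ℕ) (hn : 2 ≤ n)
    (c : Fin (n + 2) → ℝ) (hc : ∀ g, 0 ≤ c g) (hmono : Monotone c)
    (h4 : c (⟨1, by omega⟩ : Fin (n + 2)) + c (⟨2, by omega⟩ : Fin (n + 2)) <
      c (⟨3, by omega⟩ : Fin (n + 2))) :
    mmsAll n c =
      min (c (⟨0, by omega⟩ : Fin (n + 2)) + c (⟨1, by omega⟩ : Fin (n + 2)) +
            c (⟨2, by omega⟩ : Fin (n + 2)))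
        (c (⟨3, by omega⟩ : Fin (n + 2))) := by
  haveI : Nonempty (Fin n) := ⟨⟨0, by omega⟩⟩
  unfold mmsAll
  apply le_antisymm
  · exact ciSup_le (fun π => inf_le_bound n hn c hc hmono h4 π)
  · -- lower bound via the explicit partition
    set π₀ : Fin (n + 2) → Fin n := fun g =>
      if g.val ≤ 2 then ⟨0, by omega⟩ else ⟨g.val - 2, by omega⟩ with hπ₀
    have hb0 : bundleOf π₀ (⟨0, by omega⟩ : Fin n) =
        ({⟨0, by omega⟩, ⟨1, by omega⟩, ⟨2, by omega⟩} : Finset (Fin (n + 2))) := by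
      ext g
      rw [mem_bundleOf]
      simp only [hπ₀, Finset.mem_insert, Finset.mem_singleton, Fin.ext_iff]
      split_ifs with h
      · simp only [Fin.val_mk, true_iff]; omega
      · simp only [Fin.val_mk]; omega
    have hbj : ∀ j : Fin n, j.val ≠ 0 →
        bundleOf π₀ j = ({⟨j.val + 2, by omega⟩} : Finset (Fin (n + 2))) := by
      intro j hj
      ext g
      rw [mem_bundleOf, Finset.mem_singleton]
      simp only [hπ₀, Fin.ext_iff]
      split_ifs with h
      · simp; omega
      · simp; omega
    have hlow : min (c ⟨0, by omega⟩ + c ⟨1, by omega⟩ + c ⟨2, by omega⟩) (c ⟨3, by omega⟩) ≤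
        ⨅ j : Fin n, ∑ g ∈ bundleOf π₀ j, c g := by
      apply le_ciInf
      intro j
      by_cases hj : j.val = 0
      · have : j = (⟨0, by omega⟩ : Fin n) := Fin.ext hj
        rw [this, hb0, sum_three hn c]
        exact min_le_left _ _
      · rw [hbj j hj, Finset.sum_singleton]
        refine (min_le_right _ _).trans (hmono ?_)
        simp [Fin.le_def]; omega
    refine hlow.trans (le_ciSup (f := fun π : Fin (n+2) → Fin n => ⨅ j : Fin n, ∑ g ∈ bundleOf π j, c g) ?_ π₀)
    exact Set.Finite.bddAbove (Set.finite_range _)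
end
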